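/- Let γ = (γ₀, γ₁) be an automorphism of the binary tree acting trivially on level one. Then β = (β₀, β₁) (acting trivially on level one) is conjugate to γ in Ω if and only if either (γ₀ ∼ β₀ and γ₁ ∼ β₁) or (γ₀ ∼ β₁ and γ₁ ∼ β₀), where ∼ denotes conjugacy in Ω. -/

import Mathlib

namespace BinTree

/-- Vertices of the infinite rooted binary tree: finite words over `{0,1}`. -/
abbrev Vertex : Type := List Bool

/-- A function on vertices is a tree automorphism function if it preserves lengths
(levels) and prefixes. -/
def IsTreeAutFun (f : Vertex → Vertex) : Prop :=
  (∀ v, (f v).length = v.length) ∧ ∀ v w : Vertex, (f (v ++ w)).take v.length = f v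

/-- `Ω`: the automorphism group of the infinite rooted binary tree, realized as the
subgroup of permutations of the set of vertices preserving the tree structure. -/
def TreeAut : Subgroup (Equiv.Perm Vertex) where
  carrier := {e | IsTreeAutFun ⇑e}
  one_mem' := ⟨fun _ => rfl, fun v w => by
    simpa using List.take_left (l₁ := v) (l₂ := w)⟩
  mul_mem' := by
    rintro a b ha hb
    obtain ⟨ha1, ha2⟩ := ha
    obtain ⟨hb1, hb2⟩ := hb
    refine ⟨fun v => ?_, fun v w => ?_⟩
    · simp [Equiv.Perm.mul_apply, ha1, hb1]
    · have hb' : b (v ++ w) = b v ++ (b (v ++ w)).drop v.length := by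
        conv_lhs => rw [← List.take_append_drop v.length (b (v ++ w)), hb2]
      have hlen : (b v).length = v.length := hb1 v
      calc ((a * b) (v ++ w)).take v.length
          = (a (b v ++ (b (v ++ w)).drop v.length)).take v.length := by
            rw [Equiv.Perm.mul_apply, ← hb']
        _ = a (b v) := by rw [← hlen]; exact ha2 _ _
        _ = (a * b) v := rfl
  inv_mem' := by
    intro a ha
    obtain ⟨ha1, ha2⟩ := ha
    show IsTreeAutFun ⇑a⁻¹
    have hlen : ∀ v : Vertex, (a⁻¹ v).length = v.length := by
      intro v
      have h := ha1 (a⁻¹ v)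
      rw [(Equiv.Perm.eq_inv_iff_eq (f := a)).mp rfl] at h
      exact h.symm ▸ rfl
    refine ⟨hlen, fun v w => ?_⟩
    have htl : ((a⁻¹ (v ++ w)).take v.length).length = v.length := by
      rw [List.length_take, hlen, List.length_append]
      omega
    have key : a ((a⁻¹ (v ++ w)).take v.length) = v := by
      have h2 := ha2 ((a⁻¹ (v ++ w)).take v.length) ((a⁻¹ (v ++ w)).drop v.length)
      rw [List.take_append_drop, htl, (Equiv.Perm.eq_inv_iff_eq (f := a)).mp rfl] at h2
      rw [← h2]
      simpa using List.take_left (l₁ := v) (l₂ := w)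
    have h3 := congrArg (⇑a⁻¹) key
    rwa [(Equiv.Perm.inv_eq_iff_eq (f := a)).mpr rfl] at h3

/-- wreath recursion, forward map: `(g,h)σᵗ` -/
def wrFun (g h : Vertex → Vertex) (t : Bool) : Vertex → Vertex
  | [] => []
  | x :: v => (xor x t) :: (cond x (h v) (g v))

/-- wreath recursion, inverse map -/
def wrFunInv (g h : Vertex → Vertex) (t : Bool) : Vertex → Vertex
  | [] => []
  | y :: w => (xor y t) :: (cond (xor y t) (h w) (g w))

/-- `(g,h)σᵗ` as a permutation of the vertices. -/
def wrPerm (g h : Equiv.Perm Vertex) (t : Bool) : Equiv.Perm Vertex where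
  toFun := wrFun ⇑g ⇑h t
  invFun := wrFunInv ⇑g.symm ⇑h.symm t
  left_inv := by
    intro v
    cases v with
    | nil => rfl
    | cons x v => cases x <;> cases t <;> simp [wrFun, wrFunInv]
  right_inv := by
    intro v
    cases v with
    | nil => rfl
    | cons x v => cases x <;> cases t <;> simp [wrFun, wrFunInv]

/-- The element `(g,h)σᵗ` of `Ω`: acts on the first level by `σᵗ` (where `σ` is the
swap of the two level-one subtrees), with section `g` at the vertex `0` and section
`h` at the vertex `1`.  Thus `(γ₀,γ₁)τ` of the wreath recursion
`Ω ≃ (Ω × Ω) ⋊ S₂` is `wr γ₀ γ₁ t` (`t = true` iff `τ = σ`). -/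
def wr (g h : TreeAut) (t : Bool) : TreeAut :=
  ⟨wrPerm g.1 h.1 t, by
    have hg : IsTreeAutFun ⇑g.1 := g.2
    have hh : IsTreeAutFun ⇑h.1 := h.2
    constructor
    · intro v
      cases v with
      | nil => rfl
      | cons x v =>
        cases x <;> simp [wrPerm, wrFun, hg.1, hh.1]
    · intro v w
      cases v with
      | nil => simp [wrPerm, wrFun]
      | cons x v =>
        cases x <;> simp [wrPerm, wrFun, hg.2, hh.2]⟩

/-- Application of a tree automorphism to a vertex. -/
def ap (γ : TreeAut) (v : Vertex) : Vertex := γ.1 v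

/-- The permutation induced by `γ ∈ Ω` on level `n` of the tree. -/
def levelPerm (n : ℕ) (γ : TreeAut) : Equiv.Perm (List.Vector Bool n) where
  toFun v := ⟨γ.1 v.1, by
    have h : IsTreeAutFun ⇑γ.1 := γ.2
    rw [h.1 v.1]; exact v.2⟩
  invFun v := ⟨γ.1.symm v.1, by
    have h : IsTreeAutFun ⇑γ.1 := γ.2
    have h2 := h.1 (γ.1.symm v.1)
    rw [Equiv.apply_symm_apply] at h2
    exact h2.symm.trans v.2⟩
  left_inv v := Subtype.ext (Equiv.symm_apply_apply _ _)
  right_inv v := Subtype.ext (Equiv.apply_symm_apply _ _)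

/-- Restriction to level `n` as a group homomorphism. -/
def levelHom (n : ℕ) : TreeAut →* Equiv.Perm (List.Vector Bool n) where
  toFun := levelPerm n
  map_one' := Equiv.ext fun v => Subtype.ext rfl
  map_mul' := fun g h => Equiv.ext fun v => Subtype.ext rfl

/-- `sgn_n`: the sign of the permutation induced on level `n`. -/
def sgn (n : ℕ) (γ : TreeAut) : ℤˣ := Equiv.Perm.sign (levelPerm n γ)

/-- An odometer: acts as a single `2^n`-cycle on each level `n ≥ 1`. -/
def IsOdometer (γ : TreeAut) : Prop :=
  ∀ n : ℕ, 1 ≤ n → (levelPerm n γ).IsCycle ∧ (levelPerm n γ).support = Finset.univ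

/-- The profinite topology on `Ω`: the coarsest topology making all level
restrictions (to the discrete finite groups) continuous. -/
instance : TopologicalSpace TreeAut :=
  ⨅ n : ℕ, TopologicalSpace.induced (levelPerm n) ⊥

/-- A vertex `w` is in a stable cycle of `γ` of length `k`: its `γ`-orbit has exactly
`k` elements, and for every level `m` above the level of `w`, all level-`m` vertices
lying above this orbit are in one single `γ`-cycle (necessarily of length
`2^(m - n) * k`, which we record via the periodicity condition). -/
def InStableCycle (γ : TreeAut) (w : Vertex) (k : ℕ) : Prop :=
  0 < k ∧ ap (γ ^ k) w = w ∧ (∀ j : ℕ, 0 < j → j < k → ap (γ ^ j) w ≠ w) ∧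
  (∀ u : Vertex, w.length < u.length → (∃ i : ℕ, u.take w.length = ap (γ ^ i) w) →
    (ap (γ ^ (2 ^ (u.length - w.length) * k)) u = u ∧
      ∀ u' : Vertex, u'.length = u.length →
        (∃ i : ℕ, u'.take w.length = ap (γ ^ i) w) → ∃ j : ℕ, ap (γ ^ j) u = u'))

/-- Self-similar subgroup: closed under taking sections (here the section of `γ` at
the first-level vertex `x` is characterized by `(xv)γ = (x)γ ⬝ (v)γₓ`). -/
def SelfSimilar (H : Subgroup TreeAut) : Prop :=
  ∀ γ ∈ H, ∀ x : Bool, ∀ δ : TreeAut,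
    (∀ v : Vertex, ap γ (x :: v) = ap γ [x] ++ ap δ v) → δ ∈ H


/-! Every `c ∈ Ω` is uniquely `(a, b)σᵗ`. Conjugating `(γ₀, γ₁)` by it gives
`(a γ₀ a⁻¹, b γ₁ b⁻¹)` if `t = 0` and `(b γ₁ b⁻¹, a γ₀ a⁻¹)` if `t = 1`, so comparing
sections splits the conjugacy into the two cases. -/

section Sections

variable (δ : TreeAut)

lemma apply_nil : δ.1 [] = [] :=
  List.eq_nil_of_length_eq_zero (δ.2.1 [])

def rootSwap : Bool := (δ.1 [false]).headI

lemma apply_singleton (x : Bool) : δ.1 [x] = [xor x (rootSwap δ)] := by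
  obtain ⟨b₀, hb₀⟩ := List.length_eq_one_iff.mp (δ.2.1 [false])
  obtain ⟨b₁, hb₁⟩ := List.length_eq_one_iff.mp (δ.2.1 [true])
  have hne : b₁ ≠ b₀ := fun h => by
    have := δ.1.injective (hb₁.trans (h ▸ hb₀.symm))
    simp at this
  cases x <;> cases b₀ <;> cases b₁ <;> simp_all [rootSwap]

def sectionFun (x : Bool) (v : Vertex) : Vertex := (δ.1 (x :: v)).tail

lemma apply_cons (x : Bool) (v : Vertex) :
    δ.1 (x :: v) = xor x (rootSwap δ) :: sectionFun δ x v := by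
  have htake : (δ.1 (x :: v)).take 1 = [xor x (rootSwap δ)] := by
    rw [← apply_singleton]; exact δ.2.2 [x] v
  conv_lhs => rw [← List.take_append_drop 1 (δ.1 (x :: v)), htake]
  rw [sectionFun, List.drop_one]
  rfl

lemma sectionFun_bijective (x : Bool) : Function.Bijective (sectionFun δ x) := by
  refine ⟨fun v w h => ?_, fun w => ?_⟩
  · have : δ.1 (x :: v) = δ.1 (x :: w) := by rw [apply_cons, apply_cons, h]
    exact List.cons_injective (δ.1.injective this)
  · obtain ⟨y, u, hu⟩ : ∃ y u, δ.1.symm (xor x (rootSwap δ) :: w) = y :: u :=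
      List.exists_cons_of_ne_nil fun h => by simpa [h, apply_nil] using
        (δ.1.apply_symm_apply (xor x (rootSwap δ) :: w)).symm
    have h := δ.1.apply_symm_apply (xor x (rootSwap δ) :: w)
    rw [hu, apply_cons, List.cons.injEq, Bool.xor_left_inj] at h
    exact ⟨u, h.1 ▸ h.2⟩

lemma isTreeAutFun_sectionFun (x : Bool) : IsTreeAutFun (sectionFun δ x) := by
  refine ⟨fun v => ?_, fun v w => ?_⟩
  · simp [sectionFun, δ.2.1 (x :: v)]
  · have h := δ.2.2 (x :: v) w
    rw [List.cons_append, apply_cons, apply_cons] at h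
    exact List.cons_injective h

noncomputable def sectionAt (x : Bool) : TreeAut :=
  ⟨Equiv.ofBijective _ (sectionFun_bijective δ x), isTreeAutFun_sectionFun δ x⟩

theorem wr_sectionAt : wr (sectionAt δ false) (sectionAt δ true) (rootSwap δ) = δ := by
  refine Subtype.ext (Equiv.ext fun v => ?_)
  cases v with
  | nil => exact (apply_nil δ).symm
  | cons x v => cases x <;> exact (apply_cons δ _ v).symm

end Sections

lemma wr_apply_cons (g h : TreeAut) (t x : Bool) (v : Vertex) :
    (wr g h t).1 (x :: v) = xor x t :: cond x (h.1 v) (g.1 v) := rfl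

theorem wr_surjective (δ : TreeAut) : ∃ g h t, wr g h t = δ :=
  ⟨_, _, _, wr_sectionAt δ⟩

theorem wr_mul (g h g' h' : TreeAut) (t t' : Bool) :
    wr g h t * wr g' h' t' = wr (cond t' h g * g') (cond t' g h * h') (xor t t') := by
  refine Subtype.ext (Equiv.ext fun v => ?_)
  cases v with
  | nil => rfl
  | cons x v => cases x <;> cases t <;> cases t' <;> rfl

theorem wr_inj {g h g' h' : TreeAut} {t t' : Bool} :
    wr g h t = wr g' h' t' ↔ g = g' ∧ h = h' ∧ t = t' := by
  refine ⟨fun H => ?_, fun ⟨hg, hh, ht⟩ => hg ▸ hh ▸ ht ▸ rfl⟩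
  have happ (x : Bool) (v : Vertex) := congrArg (fun δ : TreeAut => δ.1 (x :: v)) H
  simp only [wr_apply_cons, List.cons.injEq, Bool.xor_right_inj] at happ
  exact ⟨Subtype.ext (Equiv.ext fun v => (happ false v).2),
    Subtype.ext (Equiv.ext fun v => (happ true v).2), (happ false []).1⟩

theorem semiconjBy_wr_iff (a b γ₀ γ₁ β₀ β₁ : TreeAut) (t : Bool) :
    SemiconjBy (wr a b t) (wr γ₀ γ₁ false) (wr β₀ β₁ false) ↔
      SemiconjBy a γ₀ (cond t β₁ β₀) ∧ SemiconjBy b γ₁ (cond t β₀ β₁) := by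
  simp only [SemiconjBy, wr_mul, wr_inj, cond_false, Bool.xor_false, Bool.false_xor, and_true]

/-- `(γ₀,γ₁)` is conjugate to `(β₀,β₁)` in `Ω` iff
(`γ₀ ∼ β₀` and `γ₁ ∼ β₁`) or (`γ₀ ∼ β₁` and `γ₁ ∼ β₀`). -/
theorem conj_wr_id_iff (γ₀ γ₁ β₀ β₁ : TreeAut) :
    IsConj (wr γ₀ γ₁ false) (wr β₀ β₁ false) ↔
      (IsConj γ₀ β₀ ∧ IsConj γ₁ β₁) ∨ (IsConj γ₀ β₁ ∧ IsConj γ₁ β₀) := by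
  simp only [isConj_iff, mul_inv_eq_iff_eq_mul]
  constructor
  · rintro ⟨c, hc⟩
    obtain ⟨a, b, t, rfl⟩ := wr_surjective c
    obtain ⟨ha, hb⟩ := (semiconjBy_wr_iff a b γ₀ γ₁ β₀ β₁ t).mp hc
    cases t
    · exact Or.inl ⟨⟨a, ha⟩, ⟨b, hb⟩⟩
    · exact Or.inr ⟨⟨a, ha⟩, ⟨b, hb⟩⟩
  · rintro (⟨⟨a, ha⟩, ⟨b, hb⟩⟩ | ⟨⟨a, ha⟩, ⟨b, hb⟩⟩)
    · exact ⟨wr a b false, (semiconjBy_wr_iff a b γ₀ γ₁ β₀ β₁ false).mpr ⟨ha, hb⟩⟩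
    · exact ⟨wr a b true, (semiconjBy_wr_iff a b γ₀ γ₁ β₀ β₁ true).mpr ⟨ha, hb⟩⟩

end BinTree
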